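/- arXiv:2511.01644 — 7 statements merged into one kernel-verified Lean document; each statement's English description precedes it below -/
import Mathlib

section
/- Let T₁,...,T₇ be commuting contractions on a Hilbert space H, and suppose there exist operators F_i on the closure of the range of D_{T₇} (1 ≤ i ≤ 6) satisfying the fundamental equations T_i - T_{7-i}* T₇ = D_{T₇} F_i D_{T₇}, and operators F̃_i on the closure of the range of D_{T₇*} satisfying T_i* - T_{7-i} T₇* = D_{T₇*} F̃_i D_{T₇*}. If additionally D_{T₇} T_i = F_i D_{T₇} + F_{7-i}* D_{T₇} T₇ for each i, then for every i with 1 ≤ i ≤ 6 and every h ∈ H: (T_i D_{T₇} - D_{T₇*} F̃_{7-i} T₇) D_{T₇} h = D_{T₇} F_i D_{T₇} h. -/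
open ContinuousLinearMap

open Polynomial


lemma aux_pow_intertwine {A : Type*} [Ring A] {x y t : A}
    (h : t * x = y * t) (n : ℕ) : t * x ^ n = y ^ n * t := by
  induction n with
  | zero => simp
  | succ n ih =>
    rw [pow_succ, pow_succ, ← mul_assoc, ih, mul_assoc, h, ← mul_assoc]

lemma aux_poly_intertwine {A : Type*} [Ring A] [Algebra ℝ A] {x y t : A}
    (h : t * x = y * t) (p : ℝ[X]) : t * aeval x p = aeval y p * t := by
  induction p using Polynomial.induction_on with
  | C r => simp [Algebra.commutes]
  | add p q hp hq => rw [map_add, map_add, mul_add, add_mul, hp, hq]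
  | monomial n r _ =>
    simp only [map_mul, aeval_C, map_pow, aeval_X]
    rw [← mul_assoc, ← Algebra.commutes, mul_assoc, aux_pow_intertwine h,
      ← mul_assoc, Algebra.commutes, mul_assoc]

lemma aux_sqrt_intertwine {A : Type*} [CStarAlgebra A] [Nontrivial A]
    [PartialOrder A] [StarOrderedRing A]
    {x y t : A} (hx : 0 ≤ x) (hy : 0 ≤ y) (h : t * x = y * t) :
    t * cfc Real.sqrt x = cfc Real.sqrt y * t := by
  have hxsa : IsSelfAdjoint x := hx.isSelfAdjoint
  have hysa : IsSelfAdjoint y := hy.isSelfAdjoint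
  set M : ℝ := max ‖x‖ ‖y‖ with hM
  have hspec : ∀ (z : A), 0 ≤ z → ‖z‖ ≤ M → ∀ r ∈ spectrum ℝ z, r ∈ Set.Icc (0:ℝ) M := by
    intro z hz hzM r hr
    refine ⟨spectrum_nonneg_of_nonneg hz hr, ?_⟩
    calc r ≤ |r| := le_abs_self r
    _ ≤ ‖z‖ := spectrum.norm_le_norm_of_mem hr
    _ ≤ M := hzM
  have key : ∀ ε : ℝ, 0 < ε → ‖t * cfc Real.sqrt x - cfc Real.sqrt y * t‖ ≤ 2 * ‖t‖ * ε := by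
    intro ε hε
    obtain ⟨p, hp⟩ := exists_polynomial_near_of_continuousOn 0 M Real.sqrt
      Real.continuous_sqrt.continuousOn ε hε
    have hnorm : ∀ (z : A), 0 ≤ z → ‖z‖ ≤ M → ‖cfc Real.sqrt z - aeval z p‖ ≤ ε := by
      intro z hz hzM
      rw [← cfc_polynomial p z, ← cfc_sub ..]
      refine norm_cfc_le hε.le fun r hr => ?_
      have := hp r (hspec z hz hzM r hr)
      rw [Real.norm_eq_abs, abs_sub_comm]
      exact this.le
    have h1 := hnorm x hx (le_max_left _ _)
    have h2 := hnorm y hy (le_max_right _ _)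
    have hpoly := aux_poly_intertwine h p
    have hsplit : t * cfc Real.sqrt x - cfc Real.sqrt y * t
        = t * (cfc Real.sqrt x - aeval x p) + (aeval y p - cfc Real.sqrt y) * t := by
      rw [mul_sub, sub_mul, hpoly]; abel
    calc ‖t * cfc Real.sqrt x - cfc Real.sqrt y * t‖
        = ‖t * (cfc Real.sqrt x - aeval x p) + (aeval y p - cfc Real.sqrt y) * t‖ := by
          rw [hsplit]
      _ ≤ ‖t * (cfc Real.sqrt x - aeval x p)‖ + ‖(aeval y p - cfc Real.sqrt y) * t‖ :=
          norm_add_le _ _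
      _ ≤ ‖t‖ * ε + ε * ‖t‖ := by
          gcongr
          · exact (norm_mul_le _ _).trans (by gcongr)
          · calc ‖(aeval y p - cfc Real.sqrt y) * t‖ ≤ ‖aeval y p - cfc Real.sqrt y‖ * ‖t‖ :=
                norm_mul_le _ _
              _ ≤ ε * ‖t‖ := by gcongr; rwa [norm_sub_rev]
      _ = 2 * ‖t‖ * ε := by ring
  rw [← sub_eq_zero, ← norm_le_zero_iff]
  refine le_of_forall_pos_le_add (fun ε hε => ?_)
  have hc : (0:ℝ) < 2 * ‖t‖ + 1 := by positivity
  have h2 := key (ε / (2 * ‖t‖ + 1)) (by positivity)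
  have h3 : 2 * ‖t‖ * (ε / (2 * ‖t‖ + 1)) ≤ (2 * ‖t‖ + 1) * (ε / (2 * ‖t‖ + 1)) := by
    exact mul_le_mul_of_nonneg_right (by linarith) (by positivity)
  rw [mul_div_cancel₀ _ hc.ne'] at h3
  linarith

lemma aux_sqrt_eq {A : Type*} [CStarAlgebra A] [PartialOrder A] [StarOrderedRing A]
    {x d : A} (hd : 0 ≤ d) (hdx : d * d = x) : d = cfc Real.sqrt x := by
  have hdsa : IsSelfAdjoint d := hd.isSelfAdjoint
  have hx : 0 ≤ x := by
    rw [← hdx]; simpa [hdsa.star_eq] using star_mul_self_nonneg d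
  have hs : 0 ≤ cfc Real.sqrt x := cfc_nonneg (fun r _ => Real.sqrt_nonneg r)
  have hss : cfc Real.sqrt x * cfc Real.sqrt x = x := by
    rw [← cfc_mul ..]
    calc cfc (fun r => Real.sqrt r * Real.sqrt r) x = cfc (fun r : ℝ => r) x :=
          cfc_congr (fun r hr => Real.mul_self_sqrt (spectrum_nonneg_of_nonneg hx hr))
      _ = x := cfc_id ℝ x
  rw [← CFC.sqrt_unique hdx hd, ← CFC.sqrt_unique hss hs]


/-- Let `T₁,...,T₇` be commuting contractions on `H`, with fundamental operators `F i`
(on the defect space of `T₇`) and `F̃ i` (on the defect space of `T₇*`) satisfying the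
fundamental equations, and additionally `D_{T₇} T_i = F_i D_{T₇} + F_{7-i}* D_{T₇} T₇`.
Then for every `1 ≤ i ≤ 6` and `h ∈ H`,
`(T_i D_{T₇} - D_{T₇*} F̃_{7-i} T₇) D_{T₇} h = D_{T₇} F_i D_{T₇} h`. -/
theorem gamma_contraction_fundamental_identity
    {H : Type*} [NormedAddCommGroup H] [InnerProductSpace ℂ H] [CompleteSpace H]
    (T : ℕ → (H →L[ℂ] H))
    (hcomm : ∀ i j, 1 ≤ i → i ≤ 7 → 1 ≤ j → j ≤ 7 → Commute (T i) (T j))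
    (hcontr : ∀ i, 1 ≤ i → i ≤ 7 → ‖T i‖ ≤ 1)
    (DT DTs : H →L[ℂ] H)
    (hDT : DT.IsPositive) (hDT2 : DT ∘L DT = 1 - adjoint (T 7) ∘L T 7)
    (hDTs : DTs.IsPositive) (hDTs2 : DTs ∘L DTs = 1 - T 7 ∘L adjoint (T 7))
    (F Ft : ℕ → (H →L[ℂ] H))
    (hF : ∀ i, 1 ≤ i → i ≤ 6 →
      T i - adjoint (T (7 - i)) ∘L T 7 = DT ∘L F i ∘L DT)
    (hFt : ∀ i, 1 ≤ i → i ≤ 6 →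
      adjoint (T i) - T (7 - i) ∘L adjoint (T 7) = DTs ∘L Ft i ∘L DTs)
    (hFE : ∀ i, 1 ≤ i → i ≤ 6 →
      DT ∘L T i = F i ∘L DT + adjoint (F (7 - i)) ∘L DT ∘L T 7) :
    ∀ i, 1 ≤ i → i ≤ 6 → ∀ h : H,
      (T i ∘L DT - DTs ∘L Ft (7 - i) ∘L T 7) (DT h) = (DT ∘L F i ∘L DT) h := by
  intro i hi1 hi6 h
  rcases subsingleton_or_nontrivial H with hH | hH
  · exact Subsingleton.elim _ _
  have hntA : Nontrivial (H →L[ℂ] H) := by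
    obtain ⟨v, hv⟩ := exists_ne (0 : H)
    exact ⟨1, 0, fun he => hv (by simpa using congrArg (fun (g : H →L[ℂ] H) => g v) he)⟩
  have hDTnn : (0 : H →L[ℂ] H) ≤ DT := (nonneg_iff_isPositive DT).mpr hDT
  have hDTsnn : (0 : H →L[ℂ] H) ≤ DTs := (nonneg_iff_isPositive DTs).mpr hDTs
  have hxnn : (0 : H →L[ℂ] H) ≤ DT * DT := by
    simpa [hDTnn.isSelfAdjoint.star_eq] using star_mul_self_nonneg DT
  have hynn : (0 : H →L[ℂ] H) ≤ DTs * DTs := by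
    simpa [hDTsnn.isSelfAdjoint.star_eq] using star_mul_self_nonneg DTs
  have e1 : DT * DT = 1 - adjoint (T 7) * T 7 := hDT2
  have e1s : DTs * DTs = 1 - T 7 * adjoint (T 7) := hDTs2
  have hcom : T 7 * (DT * DT) = (DTs * DTs) * T 7 := by
    rw [e1, e1s]; noncomm_ring
  have hDTeq : DT = cfc Real.sqrt (DT * DT) := aux_sqrt_eq hDTnn rfl
  have hDTseq : DTs = cfc Real.sqrt (DTs * DTs) := aux_sqrt_eq hDTsnn rfl
  have hT7DT : T 7 * DT = DTs * T 7 := by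
    calc T 7 * DT = T 7 * cfc Real.sqrt (DT * DT) := by rw [← hDTeq]
      _ = cfc Real.sqrt (DTs * DTs) * T 7 := aux_sqrt_intertwine hxnn hynn hcom
      _ = DTs * T 7 := by rw [← hDTseq]
  have e2 : T i - adjoint (T (7 - i)) * T 7 = DT * (F i * DT) := hF i hi1 hi6
  have e3 : adjoint (T (7 - i)) - T i * adjoint (T 7) = DTs * (Ft (7 - i) * DTs) := by
    have := hFt (7 - i) (by omega) (by omega)
    rwa [show 7 - (7 - i) = i by omega] at this
  have main : (T i * DT - DTs * (Ft (7 - i) * T 7)) * DT = DT * (F i * DT) := by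
    calc (T i * DT - DTs * (Ft (7 - i) * T 7)) * DT
        = T i * (DT * DT) - (DTs * Ft (7 - i)) * (T 7 * DT) := by noncomm_ring
      _ = T i * (1 - adjoint (T 7) * T 7) - (DTs * Ft (7 - i)) * (DTs * T 7) := by
          rw [e1, hT7DT]
      _ = T i - T i * (adjoint (T 7) * T 7)
            - (DTs * (Ft (7 - i) * DTs)) * T 7 := by noncomm_ring
      _ = T i - T i * (adjoint (T 7) * T 7)
            - (adjoint (T (7 - i)) - T i * adjoint (T 7)) * T 7 := by rw [← e3]
      _ = T i - adjoint (T (7 - i)) * T 7 := by noncomm_ring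
      _ = DT * (F i * DT) := e2
  exact congrArg (fun (g : H →L[ℂ] H) => g h) main
end

section
/- Let T₁,...,T₇ be commuting contractions on a Hilbert space H with fundamental operators F_i of (T₁,...,T₇) and F̃_i of (T₁*,...,T₇*), i.e., T_i - T_{7-i}* T₇ = D_{T₇} F_i D_{T₇} and T_i* - T_{7-i} T₇* = D_{T₇*} F̃_i D_{T₇*} for 1 ≤ i ≤ 6. Then for each i, ⟨(T₇ F_i - F̃_i* T₇) D_{T₇} h₁, D_{T₇*} h₂⟩ = 0 for all h₁, h₂ ∈ H; consequently T₇ F_i D_{T₇} = F̃_i* T₇ D_{T₇} (as operators on H), where F_i, F̃_i are viewed as operators on H vanishing on the orthogonal complements of the corresponding defect spaces. -/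
/-!
Since `T₇ D_{T₇}² = T₇ - T₇T₇*T₇ = D_{T₇*}² T₇`, taking square roots gives `T₇ D_{T₇} = D_{T₇*} T₇`.
With this, the two fundamental equations and `TᵢT₇ = T₇Tᵢ` yield
`D_{T₇*} (T₇ Fᵢ - F̃ᵢ* T₇) D_{T₇} = T₇ (Tᵢ - T₇₋ᵢ* T₇) - (Tᵢ - T₇T₇₋ᵢ*) T₇ = 0`.
On the other hand `(T₇ Fᵢ - F̃ᵢ* T₇) D_{T₇}` takes values in the closure of `Ran D_{T₇*}`:
`T₇` maps `Ran D_{T₇}` into `Ran D_{T₇*}`, and `F̃ᵢ*` has range in `(ker F̃ᵢ)^⊥ ⊆ (Ran D_{T₇*})^⊥^⊥`.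
As `D_{T₇*}` is self-adjoint, its kernel meets the closure of its range only in `0`.
-/

open ContinuousLinearMap
open scoped InnerProductSpace ComplexOrder

theorem Commute.of_mul_self_left {A : Type*} [CStarAlgebra A] [PartialOrder A] [StarOrderedRing A]
    {d x : A} (hd : 0 ≤ d) (h : Commute (d * d) x) : Commute d x := by
  simpa [← CFC.sqrt_eq_cfc, CFC.sqrt_mul_self d hd] using h.cfc_nnreal NNReal.sqrt

theorem mul_sub_eq_zero_of_fundamental {R : Type*} [Ring R] [StarRing R] {t s u d e f g : R}
    (he : IsSelfAdjoint e) (hint : t * d = e * t) (hcomm : Commute u t)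
    (hf : u - star s * t = d * (f * d)) (hg : star u - s * star t = e * (g * e)) :
    e * (t * (f * d) - star g * (t * d)) = 0 := by
  have hg' : u - t * star s = e * (star g * e) := by
    simpa [star_sub, star_mul, he.star_eq, mul_assoc] using congr(star $hg)
  have hf_term : e * (t * (f * d)) = t * (d * (f * d)) := by
    rw [← mul_assoc, ← hint, mul_assoc]
  have hg_term : e * (star g * (t * d)) = e * (star g * e) * t := by
    rw [hint]
    simp only [mul_assoc]
  rw [mul_sub, hf_term, hg_term, ← hf, ← hg']
  simp only [mul_sub, sub_mul, mul_assoc, hcomm.eq]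
  abel

namespace ContinuousLinearMap

section DirectSum

variable {E F : Type*} [NormedAddCommGroup E] [InnerProductSpace ℂ E]
  [NormedAddCommGroup F] [InnerProductSpace ℂ F]

noncomputable def prodMapL2 (P : E →L[ℂ] E) (Q : F →L[ℂ] F) :
    WithLp 2 (E × F) →L[ℂ] WithLp 2 (E × F) :=
  (WithLp.prodContinuousLinearEquiv 2 ℂ E F).symm.toContinuousLinearMap ∘L P.prodMap Q ∘L
    (WithLp.prodContinuousLinearEquiv 2 ℂ E F).toContinuousLinearMap

@[simp]
lemma prodMapL2_apply (P : E →L[ℂ] E) (Q : F →L[ℂ] F) (z : WithLp 2 (E × F)) :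
    prodMapL2 P Q z = WithLp.toLp 2 (P z.fst, Q z.snd) :=
  rfl

lemma IsPositive.prodMapL2 {P : E →L[ℂ] E} {Q : F →L[ℂ] F} (hP : P.IsPositive)
    (hQ : Q.IsPositive) : (P.prodMapL2 Q).IsPositive := by
  refine (isPositive_iff _).2 ⟨fun z w => ?_, fun z => ?_⟩
  · simp [WithLp.prod_inner_apply, hP.inner_left_eq_inner_right, hQ.inner_left_eq_inner_right]
  · simpa [WithLp.prod_inner_apply] using
      add_nonneg (hP.inner_nonneg_left z.fst) (hQ.inner_nonneg_left z.snd)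

theorem comp_eq_comp_of_comp_mul_self [CompleteSpace E] [CompleteSpace F]
    {P : E →L[ℂ] E} {Q : F →L[ℂ] F} {S : E →L[ℂ] F}
    (hP : P.IsPositive) (hQ : Q.IsPositive) (h : S ∘L (P ∘L P) = (Q ∘L Q) ∘L S) :
    S ∘L P = Q ∘L S := by
  set D := P.prodMapL2 Q
  -- the off-diagonal operator `[[0, 0], [S, 0]]`: it commutes with `D²`, hence with `D = √(D²)`
  let X : WithLp 2 (E × F) →L[ℂ] WithLp 2 (E × F) :=
    (WithLp.prodContinuousLinearEquiv 2 ℂ E F).symm.toContinuousLinearMap ∘L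
      inr ℂ E F ∘L S ∘L fst ℂ E F ∘L (WithLp.prodContinuousLinearEquiv 2 ℂ E F).toContinuousLinearMap
  have hX_apply (z : WithLp 2 (E × F)) : X z = WithLp.toLp 2 (0, S z.fst) := rfl
  have hD : 0 ≤ D := (nonneg_iff_isPositive D).2 (hP.prodMapL2 hQ)
  have hXD2 : Commute (D * D) X := by
    ext z : 1
    simpa [hX_apply, D] using congr(WithLp.toLp 2 ((0 : E), $h z.fst)).symm
  have hXD : Commute D X := hXD2.of_mul_self_left hD
  ext x
  simpa [hX_apply, D] using congr(($hXD.eq (WithLp.toLp 2 (x, 0))).snd).symm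

end DirectSum

theorem mapsTo_closure_range_of_comp_eq {𝕜 E F G H : Type*} [RCLike 𝕜]
    [NormedAddCommGroup E] [NormedSpace 𝕜 E] [NormedAddCommGroup F] [NormedSpace 𝕜 F]
    [NormedAddCommGroup G] [NormedSpace 𝕜 G] [NormedAddCommGroup H] [NormedSpace 𝕜 H]
    {T : E →L[𝕜] F} {A : G →L[𝕜] E} {B : H →L[𝕜] F} {C : G →L[𝕜] H} (h : T ∘L A = B ∘L C) :
    Set.MapsTo T (closure (Set.range A)) (closure (Set.range B)) := by
  refine Set.MapsTo.closure ?_ T.continuous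
  rintro _ ⟨x, rfl⟩
  exact ⟨C x, congr($h x).symm⟩

section Hilbert

variable {𝕜 E F G : Type*} [RCLike 𝕜]
  [NormedAddCommGroup E] [InnerProductSpace 𝕜 E] [CompleteSpace E]
  [NormedAddCommGroup F] [InnerProductSpace 𝕜 F] [CompleteSpace F]
  [NormedAddCommGroup G] [InnerProductSpace 𝕜 G]

theorem disjoint_ker_topologicalClosure_range {A : E →L[𝕜] E} (hA : IsStarNormal A) :
    Disjoint A.ker A.range.topologicalClosure := by
  rw [← hA.orthogonal_range, ← Submodule.orthogonal_closure]
  exact (Submodule.orthogonal_disjoint _).symm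

theorem range_adjoint_le_topologicalClosure_range {S : E →L[𝕜] F} {A : G →L[𝕜] E}
    (hS : A.rangeᗮ ≤ S.ker) : (adjoint S).range ≤ A.range.topologicalClosure :=
  calc (adjoint S).range ≤ (adjoint S).range.topologicalClosure := Submodule.le_topologicalClosure _
    _ = S.kerᗮ := (orthogonal_ker S).symm
    _ ≤ A.rangeᗮᗮ := Submodule.orthogonal_le hS
    _ = A.range.topologicalClosure := Submodule.orthogonal_orthogonal_eq_closure _

end Hilbert

end ContinuousLinearMap

theorem gamma_contraction_intertwine_general
    {H : Type*} [NormedAddCommGroup H] [InnerProductSpace ℂ H] [CompleteSpace H]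
    (T : ℕ → (H →L[ℂ] H))
    (hcomm : ∀ i j, 1 ≤ i → i ≤ 7 → 1 ≤ j → j ≤ 7 → Commute (T i) (T j))
    (DT DTs : H →L[ℂ] H)
    (hDT : DT.IsPositive) (hDT2 : DT ∘L DT = 1 - adjoint (T 7) ∘L T 7)
    (hDTs : DTs.IsPositive) (hDTs2 : DTs ∘L DTs = 1 - T 7 ∘L adjoint (T 7))
    (F Ft : ℕ → (H →L[ℂ] H))
    (hF : ∀ i, 1 ≤ i → i ≤ 6 →
      T i - adjoint (T (7 - i)) ∘L T 7 = DT ∘L F i ∘L DT)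
    (hFt : ∀ i, 1 ≤ i → i ≤ 6 →
      adjoint (T i) - T (7 - i) ∘L adjoint (T 7) = DTs ∘L Ft i ∘L DTs)
    (hFran : ∀ i, 1 ≤ i → i ≤ 6 → ∀ x : H, F i x ∈ closure (Set.range ⇑DT))
    (hFtsupp : ∀ i, 1 ≤ i → i ≤ 6 → ∀ x : H, (∀ y : H, ⟪DTs y, x⟫_ℂ = 0) → Ft i x = 0) :
    ∀ i, 1 ≤ i → i ≤ 6 →
      (∀ h₁ h₂ : H,
        ⟪(T 7 ∘L F i - adjoint (Ft i) ∘L T 7) (DT h₁), DTs h₂⟫_ℂ = 0) ∧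
      T 7 ∘L F i ∘L DT = adjoint (Ft i) ∘L T 7 ∘L DT := by
  intro i hi1 hi6
  have hdefect : T 7 ∘L DT = DTs ∘L T 7 := comp_eq_comp_of_comp_mul_self hDT hDTs <| by
    simp [hDT2, hDTs2, comp_sub, sub_comp, comp_assoc, one_def]
  have hker : DTs ∘L (T 7 ∘L F i ∘L DT - adjoint (Ft i) ∘L T 7 ∘L DT) = 0 :=
    mul_sub_eq_zero_of_fundamental hDTs.isSelfAdjoint hdefect
      (hcomm i 7 hi1 (by omega) (by norm_num) le_rfl) (hF i hi1 hi6) (hFt i hi1 hi6)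
  have hrange (x : H) :
      (T 7 ∘L F i ∘L DT - adjoint (Ft i) ∘L T 7 ∘L DT) x ∈ DTs.range.topologicalClosure := by
    simp only [sub_apply, comp_apply]
    refine sub_mem ?_ (range_adjoint_le_topologicalClosure_range ?_ (LinearMap.mem_range_self _ _))
    · rw [← SetLike.mem_coe, Submodule.topologicalClosure_coe, LinearMap.coe_range, coe_coe]
      exact mapsTo_closure_range_of_comp_eq hdefect (hFran i hi1 hi6 (DT x))
    · exact fun y hy => hFtsupp i hi1 hi6 y fun z => hy _ ⟨z, rfl⟩
  have hop : T 7 ∘L F i ∘L DT = adjoint (Ft i) ∘L T 7 ∘L DT := sub_eq_zero.1 <| ext fun x =>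
    Submodule.disjoint_def.1 (disjoint_ker_topologicalClosure_range hDTs.isSelfAdjoint.isStarNormal)
      _ congr($hker x) (hrange x)
  refine ⟨fun h₁ h₂ => ?_, hop⟩
  rw [← comp_apply, sub_comp, comp_assoc, comp_assoc, hop, sub_self, zero_apply, inner_zero_left]

/-- Let `T₁,...,T₇` be commuting contractions with fundamental operators `F i` of
`(T₁,...,T₇)` and `F̃ i` of `(T₁*,...,T₇*)` (supported on the respective defect spaces).
Then `⟪(T₇ F_i - F̃_i* T₇) D_{T₇} h₁, D_{T₇*} h₂⟫ = 0` for all `h₁, h₂`, and consequently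
`T₇ F_i D_{T₇} = F̃_i* T₇ D_{T₇}`. -/
theorem gamma_contraction_intertwine
    {H : Type*} [NormedAddCommGroup H] [InnerProductSpace ℂ H] [CompleteSpace H]
    (T : ℕ → (H →L[ℂ] H))
    (hcomm : ∀ i j, 1 ≤ i → i ≤ 7 → 1 ≤ j → j ≤ 7 → Commute (T i) (T j))
    (hcontr : ∀ i, 1 ≤ i → i ≤ 7 → ‖T i‖ ≤ 1)
    (DT DTs : H →L[ℂ] H)
    (hDT : DT.IsPositive) (hDT2 : DT ∘L DT = 1 - adjoint (T 7) ∘L T 7)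
    (hDTs : DTs.IsPositive) (hDTs2 : DTs ∘L DTs = 1 - T 7 ∘L adjoint (T 7))
    (F Ft : ℕ → (H →L[ℂ] H))
    (hF : ∀ i, 1 ≤ i → i ≤ 6 →
      T i - adjoint (T (7 - i)) ∘L T 7 = DT ∘L F i ∘L DT)
    (hFt : ∀ i, 1 ≤ i → i ≤ 6 →
      adjoint (T i) - T (7 - i) ∘L adjoint (T 7) = DTs ∘L Ft i ∘L DTs)
    (hFran : ∀ i, 1 ≤ i → i ≤ 6 → ∀ x : H, F i x ∈ closure (Set.range ⇑DT))
    (hFsupp : ∀ i, 1 ≤ i → i ≤ 6 → ∀ x : H, (∀ y : H, ⟪DT y, x⟫_ℂ = 0) → F i x = 0)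
    (hFtran : ∀ i, 1 ≤ i → i ≤ 6 → ∀ x : H, Ft i x ∈ closure (Set.range ⇑DTs))
    (hFtsupp : ∀ i, 1 ≤ i → i ≤ 6 → ∀ x : H, (∀ y : H, ⟪DTs y, x⟫_ℂ = 0) → Ft i x = 0) :
    ∀ i, 1 ≤ i → i ≤ 6 →
      (∀ h₁ h₂ : H,
        ⟪(T 7 ∘L F i - adjoint (Ft i) ∘L T 7) (DT h₁), DTs h₂⟫_ℂ = 0) ∧
      T 7 ∘L F i ∘L DT = adjoint (Ft i) ∘L T 7 ∘L DT :=
  gamma_contraction_intertwine_general T hcomm DT DTs hDT hDT2 hDTs hDTs2 F Ft hF hFt hFran hFtsupp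
end

section
/- Let T_i, T_{7-i}, T₇ be commuting bounded operators on a Hilbert space H with T₇ a contraction, and suppose F_i, F_{7-i} are commuting bounded operators satisfying D_{T₇} T_i = F_i D_{T₇} + F_{7-i}* D_{T₇} T₇ and D_{T₇} T_{7-i} = F_{7-i} D_{T₇} + F_i* D_{T₇} T₇, as well as T_i - T_{7-i}* T₇ = D_{T₇} F_i D_{T₇} and T_{7-i} - T_i* T₇ = D_{T₇} F_{7-i} D_{T₇}. Then (T_i* T_i - T_{7-i}* T_{7-i}) T₇ = D_{T₇}(F_i F_i* - F_{7-i} F_{7-i}*) D_{T₇} T₇. -/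
open ContinuousLinearMap

set_option maxHeartbeats 1000000

/-- Let `T_i, T_{7-i}, T₇` be commuting bounded operators, `T₇` a contraction, and
`F_i, F_{7-i}` commuting bounded operators satisfying the fundamental equations and
`D_{T₇}T_i = F_i D_{T₇} + F_{7-i}* D_{T₇} T₇`, `D_{T₇}T_{7-i} = F_{7-i} D_{T₇} + F_i* D_{T₇} T₇`.
Then `(T_i* T_i - T_{7-i}* T_{7-i}) T₇ = D_{T₇}(F_i F_i* - F_{7-i} F_{7-i}*) D_{T₇} T₇`. -/
theorem commutator_transfer_identity
    {H : Type*} [NormedAddCommGroup H] [InnerProductSpace ℂ H] [CompleteSpace H]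
    (Ti T7mi T7 DT Fi F7mi : H →L[ℂ] H)
    (hc1 : Commute Ti T7mi) (hc2 : Commute Ti T7) (hc3 : Commute T7mi T7)
    (hT7 : ‖T7‖ ≤ 1)
    (hDT : DT.IsPositive) (hDT2 : DT ∘L DT = 1 - adjoint T7 ∘L T7)
    (hFcomm : Commute Fi F7mi)
    (h1 : DT ∘L Ti = Fi ∘L DT + adjoint F7mi ∘L DT ∘L T7)
    (h2 : DT ∘L T7mi = F7mi ∘L DT + adjoint Fi ∘L DT ∘L T7)
    (h3 : Ti - adjoint T7mi ∘L T7 = DT ∘L Fi ∘L DT)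
    (h4 : T7mi - adjoint Ti ∘L T7 = DT ∘L F7mi ∘L DT)
    (h5 : adjoint Ti ∘L Ti - adjoint T7mi ∘L T7mi
        = DT ∘L (adjoint Fi ∘L Fi - adjoint F7mi ∘L F7mi) ∘L DT) :
    (adjoint Ti ∘L Ti - adjoint T7mi ∘L T7mi) ∘L T7
      = DT ∘L (Fi ∘L adjoint Fi - F7mi ∘L adjoint F7mi) ∘L DT ∘L T7 := by
  simp only [← ContinuousLinearMap.mul_def] at *
  -- adjoints commute
  have hadj : adjoint Fi * adjoint F7mi = adjoint F7mi * adjoint Fi := by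
    have := congrArg adjoint hFcomm.eq
    simpa only [ContinuousLinearMap.mul_def, adjoint_comp] using this.symm
  -- rewrite hypotheses with convenient associativity
  have h1' : DT * Ti = Fi * DT + adjoint F7mi * (DT * T7) := by
    exact h1
  have h2' : DT * T7mi = F7mi * DT + adjoint Fi * (DT * T7) := by
    exact h2
  -- expand DT * Ti * T7mi
  have e1 : DT * (Ti * T7mi)
      = Fi * F7mi * DT + Fi * adjoint Fi * (DT * T7)
        + adjoint F7mi * F7mi * (DT * T7)
        + adjoint F7mi * adjoint Fi * (DT * T7 * T7) := by
    calc DT * (Ti * T7mi) = (DT * Ti) * T7mi := by rw [mul_assoc]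
      _ = Fi * (DT * T7mi) + adjoint F7mi * (DT * (T7 * T7mi)) := by
          rw [h1']; noncomm_ring
      _ = Fi * (DT * T7mi) + adjoint F7mi * ((DT * T7mi) * T7) := by
          rw [← hc3.eq]; noncomm_ring
      _ = _ := by rw [h2']; noncomm_ring
  have e2 : DT * (T7mi * Ti)
      = F7mi * Fi * DT + F7mi * adjoint F7mi * (DT * T7)
        + adjoint Fi * Fi * (DT * T7)
        + adjoint Fi * adjoint F7mi * (DT * T7 * T7) := by
    calc DT * (T7mi * Ti) = (DT * T7mi) * Ti := by rw [mul_assoc]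
      _ = F7mi * (DT * Ti) + adjoint Fi * (DT * (T7 * Ti)) := by
          rw [h2']; noncomm_ring
      _ = F7mi * (DT * Ti) + adjoint Fi * ((DT * Ti) * T7) := by
          rw [← hc2.eq]; noncomm_ring
      _ = _ := by rw [h1']; noncomm_ring
  -- cancellation
  have hsum : Fi * adjoint Fi * (DT * T7) + adjoint F7mi * F7mi * (DT * T7)
      = F7mi * adjoint F7mi * (DT * T7) + adjoint Fi * Fi * (DT * T7) := by
    have e3 : DT * (Ti * T7mi) = DT * (T7mi * Ti) := by rw [hc1.eq]
    rw [e1, e2, hFcomm.eq, hadj] at e3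
    have := e3
    abel_nf at this ⊢
    linear_combination (norm := abel) this
  have key : (Fi * adjoint Fi - F7mi * adjoint F7mi) * (DT * T7)
      = (adjoint Fi * Fi - adjoint F7mi * F7mi) * (DT * T7) := by
    have : Fi * adjoint Fi * (DT * T7) - F7mi * adjoint F7mi * (DT * T7)
        = adjoint Fi * Fi * (DT * T7) - adjoint F7mi * F7mi * (DT * T7) := by
      rw [sub_eq_sub_iff_add_eq_add]
      linear_combination (norm := abel) hsum
    calc (Fi * adjoint Fi - F7mi * adjoint F7mi) * (DT * T7)
        = Fi * adjoint Fi * (DT * T7) - F7mi * adjoint F7mi * (DT * T7) := by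
          noncomm_ring
      _ = adjoint Fi * Fi * (DT * T7) - adjoint F7mi * F7mi * (DT * T7) := this
      _ = _ := by noncomm_ring
  calc (adjoint Ti * Ti - adjoint T7mi * T7mi) * T7
      = DT * ((adjoint Fi * Fi - adjoint F7mi * F7mi) * (DT * T7)) := by
        rw [h5]; noncomm_ring
    _ = DT * ((Fi * adjoint Fi - F7mi * adjoint F7mi) * (DT * T7)) := by rw [key]
    _ = _ := by noncomm_ring
end

section
/- Let T₇ be a contraction on H, T_i a bounded operator commuting with T₇, and F̃_i, F̃_{7-i} bounded operators on the closure of Ran D_{T₇*} satisfying D_{T₇*} T_i* = F̃_i D_{T₇*} + F̃_{7-i}* D_{T₇*} T₇*. Then for all n ≥ 0 and ξ in the closure of Ran D_{T₇*}: T₇ⁿ D_{T₇*} F̃_i* ξ + T₇^{n+1} D_{T₇*} F̃_{7-i} ξ = T_i T₇ⁿ D_{T₇*} ξ. -/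
open ContinuousLinearMap

theorem comp_eq_of_comp_adjoint_eq {𝕜 H : Type*} [RCLike 𝕜] [NormedAddCommGroup H]
    [InnerProductSpace 𝕜 H] [CompleteSpace H] {A T D F G : H →L[𝕜] H} (hD : IsSelfAdjoint D)
    (h : D ∘L adjoint A = F ∘L D + adjoint G ∘L D ∘L adjoint T) :
    A ∘L D = D ∘L adjoint F + T ∘L D ∘L G := by
  simpa only [adjoint_comp, adjoint_adjoint, hD.adjoint_eq, map_add, comp_assoc] using
    congrArg adjoint h

theorem pow_apply_add_pow_succ_apply_eq {𝕜 H : Type*} [RCLike 𝕜] [NormedAddCommGroup H]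
    [NormedSpace 𝕜 H] {A T D E G : H →L[𝕜] H} (hAT : Commute A T)
    (h : A ∘L D = D ∘L E + T ∘L D ∘L G) (n : ℕ) (x : H) :
    (T ^ n) (D (E x)) + (T ^ (n + 1)) (D (G x)) = A ((T ^ n) (D x)) := by
  have hAD : A (D x) = D (E x) + T (D (G x)) := by simpa using congrArg (· x) h
  have hATn : A ((T ^ n) (D x)) = (T ^ n) (A (D x)) := congrArg (· (D x)) (hAT.pow_right n).eq
  rw [hATn, hAD, map_add, pow_succ, mul_apply_eq_comp]

theorem model_intertwining_identity_general
    {H : Type*} [NormedAddCommGroup H] [InnerProductSpace ℂ H] [CompleteSpace H]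
    (T7 Ti DTs Fti Ft7mi : H →L[ℂ] H)
    (hcomm : Commute Ti T7)
    (hDTs : DTs.IsPositive)
    (hfund : DTs ∘L adjoint Ti = Fti ∘L DTs + adjoint Ft7mi ∘L DTs ∘L adjoint T7) :
    ∀ (n : ℕ) (ξ : H), ξ ∈ closure (Set.range ⇑DTs) →
      (T7 ^ n) (DTs (adjoint Fti ξ)) + (T7 ^ (n + 1)) (DTs (Ft7mi ξ))
        = Ti ((T7 ^ n) (DTs ξ)) := fun n ξ _ =>
  pow_apply_add_pow_succ_apply_eq hcomm
    (comp_eq_of_comp_adjoint_eq hDTs.isSelfAdjoint hfund) n ξ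

/-- Let `T₇` be a contraction, `T_i` a bounded operator commuting with `T₇`, and
`F̃_i, F̃_{7-i}` bounded operators satisfying
`D_{T₇*} T_i* = F̃_i D_{T₇*} + F̃_{7-i}* D_{T₇*} T₇*`.  Then for every `n ≥ 0` and `ξ`
in the closure of `Ran D_{T₇*}`:
`T₇ⁿ D_{T₇*} F̃_i* ξ + T₇ⁿ⁺¹ D_{T₇*} F̃_{7-i} ξ = T_i T₇ⁿ D_{T₇*} ξ`. -/
theorem model_intertwining_identity
    {H : Type*} [NormedAddCommGroup H] [InnerProductSpace ℂ H] [CompleteSpace H]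
    (T7 Ti DTs Fti Ft7mi : H →L[ℂ] H)
    (hT7 : ‖T7‖ ≤ 1) (hcomm : Commute Ti T7)
    (hDTs : DTs.IsPositive) (hDTs2 : DTs ∘L DTs = 1 - T7 ∘L adjoint T7)
    (hfund : DTs ∘L adjoint Ti = Fti ∘L DTs + adjoint Ft7mi ∘L DTs ∘L adjoint T7) :
    ∀ (n : ℕ) (ξ : H), ξ ∈ closure (Set.range ⇑DTs) →
      (T7 ^ n) (DTs (adjoint Fti ξ)) + (T7 ^ (n + 1)) (DTs (Ft7mi ξ))
        = Ti ((T7 ^ n) (DTs ξ)) :=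
  model_intertwining_identity_general T7 Ti DTs Fti Ft7mi hcomm hDTs hfund
end

section
/- Let (T₁,...,T₇) and (T'₁,...,T'₇) be 7-tuples of bounded operators on Hilbert spaces H and H' with T₇, T'₇ contractions, and suppose there is a unitary U : H → H' with U T_i = T'_i U for all 1 ≤ i ≤ 7. If F_i on (the closure of Ran D_{T₇}) and F'_i on (the closure of Ran D_{T'₇}) satisfy T_i - T_{7-i}* T₇ = D_{T₇} F_i D_{T₇} and T'_i - T'_{7-i}* T'₇ = D_{T'₇} F'_i D_{T'₇} for 1 ≤ i ≤ 6, then D_{T'₇} U F_i U* D_{T'₇} = D_{T'₇} F'_i D_{T'₇}; in particular, if F_i, F'_i are supported on the respective defect spaces, F'_i = U F_i U* as operators on those spaces. -/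
open ContinuousLinearMap
open scoped InnerProductSpace

/-!
Conjugation by `U` is a ⋆-algebra isomorphism `B(H) ≃ B(H')`; it maps `T_i` to `T'_i`, hence
`D_{T₇}²` to `D_{T'₇}²`, and, being order preserving, the positive operator `D_{T₇}` to the
positive square root `D_{T'₇}`. Applying it to the fundamental equation for `F_i` gives the first
claim. For the second, `G = F'_i - U F_i U*` is supported on `closure (range D)`, `D = D_{T'₇}`,
and `D G D = 0`: every `G (D y)` lies in `closure (range D)` and in `(range D)ᗮ = ker D`, so `G`
vanishes on `closure (range D)` as well as on its orthogonal complement.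
-/

section Support

variable {𝕜 E E₂ : Type*} [RCLike 𝕜] [NormedAddCommGroup E] [InnerProductSpace 𝕜 E]
  [NormedAddCommGroup E₂] [InnerProductSpace 𝕜 E₂]

lemma ContinuousLinearMap.closure_range_eq_topologicalClosure_range (D : E →L[𝕜] E₂) :
    closure (Set.range D) = ((D : E →ₗ[𝕜] E₂).range.topologicalClosure : Set E₂) := by
  rw [Submodule.topologicalClosure_coe, LinearMap.coe_range]
  rfl

lemma ContinuousLinearMap.mem_orthogonal_range_iff (D : E →L[𝕜] E₂) (x : E₂) :
    x ∈ (D : E →ₗ[𝕜] E₂).rangeᗮ ↔ ∀ y, ⟪D y, x⟫_𝕜 = 0 := by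
  simp [Submodule.mem_orthogonal]

/-- `F` is an operator on `closure (range D)`, extended by `0` on the orthogonal complement. -/
def IsSupportedOnClosureRange (D F : E →L[𝕜] E) : Prop :=
  (∀ x, F x ∈ closure (Set.range D)) ∧ ∀ x, (∀ y, ⟪D y, x⟫_𝕜 = 0) → F x = 0

namespace IsSupportedOnClosureRange

variable {D F G : E →L[𝕜] E}

lemma sub (hF : IsSupportedOnClosureRange D F) (hG : IsSupportedOnClosureRange D G) :
    IsSupportedOnClosureRange D (F - G) := by
  refine ⟨fun x => ?_, fun x hx => ?_⟩
  · have hFx := hF.1 x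
    have hGx := hG.1 x
    rw [D.closure_range_eq_topologicalClosure_range] at hFx hGx ⊢
    exact Submodule.sub_mem _ hFx hGx
  · simp [hF.2 x hx, hG.2 x hx]

lemma conjStarAlgEquiv [CompleteSpace E] [CompleteSpace E₂] (U : E ≃ₗᵢ[𝕜] E₂)
    (hF : IsSupportedOnClosureRange D F) :
    IsSupportedOnClosureRange (U.conjStarAlgEquiv D) (U.conjStarAlgEquiv F) := by
  refine ⟨fun x => ?_, fun x hx => ?_⟩
  · refine closure_mono ?_
      (image_closure_subset_closure_image U.continuous ⟨_, hF.1 (U.symm x), rfl⟩)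
    rintro _ ⟨_, ⟨y, rfl⟩, rfl⟩
    exact ⟨U y, by simp⟩
  · have hFx : F (U.symm x) = 0 := hF.2 _ fun y => by
      simpa [U.inner_map_eq_flip] using hx (U y)
    simp [hFx]

variable [CompleteSpace E]

theorem eq_zero (hD : IsSelfAdjoint D) (hG : IsSupportedOnClosureRange D G)
    (hDGD : D ∘L G ∘L D = 0) : G = 0 := by
  set K := (D : E →ₗ[𝕜] E).range
  have hGD : ∀ y, G (D y) = 0 := by
    intro y
    have h_closure := hG.1 (D y)
    rw [D.closure_range_eq_topologicalClosure_range] at h_closure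
    have h_orthogonal : G (D y) ∈ K.topologicalClosureᗮ := by
      rw [Submodule.orthogonal_closure, D.mem_orthogonal_range_iff]
      intro z
      rw [← hD.adjoint_eq, adjoint_inner_left, hD.adjoint_eq]
      simpa using congr(⟪z, $hDGD y⟫_𝕜)
    simpa using (Submodule.orthogonal_disjoint _).le_bot ⟨h_closure, h_orthogonal⟩
  have h_closure_le : K.topologicalClosure ≤ (G : E →ₗ[𝕜] E).ker :=
    Submodule.topologicalClosure_minimal _ (by rintro _ ⟨y, rfl⟩; exact hGD y) G.isClosed_ker
  have h_orthogonal_le : Kᗮ ≤ (G : E →ₗ[𝕜] E).ker :=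
    fun x hx => hG.2 x ((D.mem_orthogonal_range_iff x).1 hx)
  have h_sup : Kᗮ ⊔ Kᗮᗮ = ⊤ := Submodule.sup_orthogonal_of_hasOrthogonalProjection
  rw [K.orthogonal_orthogonal_eq_closure] at h_sup
  ext x
  exact sup_le h_orthogonal_le h_closure_le (h_sup ▸ Submodule.mem_top)

theorem eq_of_comp_comp_eq (hD : IsSelfAdjoint D) (hF : IsSupportedOnClosureRange D F)
    (hG : IsSupportedOnClosureRange D G) (h : D ∘L F ∘L D = D ∘L G ∘L D) : F = G := by
  refine sub_eq_zero.1 ((hF.sub hG).eq_zero hD ?_)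
  rw [sub_comp, comp_sub, h, sub_self]

end IsSupportedOnClosureRange

end Support

theorem LinearIsometryEquiv.conjStarAlgEquiv_eq_of_comp_self_eq {H K : Type*}
    [NormedAddCommGroup H] [InnerProductSpace ℂ H] [CompleteSpace H]
    [NormedAddCommGroup K] [InnerProductSpace ℂ K] [CompleteSpace K] (U : H ≃ₗᵢ[ℂ] K)
    {A D : H →L[ℂ] H} {A' D' : K →L[ℂ] K} (hA : U.conjStarAlgEquiv A = A')
    (hD : D.IsPositive) (hD2 : D ∘L D = 1 - adjoint A ∘L A)
    (hD' : D'.IsPositive) (hD'2 : D' ∘L D' = 1 - adjoint A' ∘L A') :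
    U.conjStarAlgEquiv D = D' := by
  rw [← nonneg_iff_isPositive] at hD hD'
  rw [← CFC.sq_eq_sq_iff _ _ (map_nonneg _ hD) hD', sq, sq, ← map_mul]
  change U.conjStarAlgEquiv (D ∘L D) = D' ∘L D'
  rw [hD2, hD'2, ← hA]
  simp [← ContinuousLinearMap.mul_def, ← star_eq_adjoint, map_star]

theorem fundamental_operators_unitarily_equivalent_general
    {H H' : Type*} [NormedAddCommGroup H] [InnerProductSpace ℂ H] [CompleteSpace H]
    [NormedAddCommGroup H'] [InnerProductSpace ℂ H'] [CompleteSpace H']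
    (T : ℕ → (H →L[ℂ] H)) (T' : ℕ → (H' →L[ℂ] H'))
    (U : H ≃ₗᵢ[ℂ] H')
    (hU : ∀ i, 1 ≤ i → i ≤ 7 → ∀ x : H, U (T i x) = T' i (U x))
    (D7 : H →L[ℂ] H) (D7' : H' →L[ℂ] H')
    (hD7 : D7.IsPositive) (hD72 : D7 ∘L D7 = 1 - adjoint (T 7) ∘L T 7)
    (hD7' : D7'.IsPositive) (hD7'2 : D7' ∘L D7' = 1 - adjoint (T' 7) ∘L T' 7)
    (F : ℕ → (H →L[ℂ] H)) (F' : ℕ → (H' →L[ℂ] H'))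
    (hF : ∀ i, 1 ≤ i → i ≤ 6 →
      T i - adjoint (T (7 - i)) ∘L T 7 = D7 ∘L F i ∘L D7)
    (hF' : ∀ i, 1 ≤ i → i ≤ 6 →
      T' i - adjoint (T' (7 - i)) ∘L T' 7 = D7' ∘L F' i ∘L D7') :
    ∀ i, 1 ≤ i → i ≤ 6 →
      (∀ x : H', D7' (U (F i (U.symm (D7' x)))) = D7' (F' i (D7' x))) ∧
      ((∀ x : H, F i x ∈ closure (Set.range ⇑D7)) →
       (∀ x : H, (∀ y : H, ⟪D7 y, x⟫_ℂ = 0) → F i x = 0) →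
       (∀ x : H', F' i x ∈ closure (Set.range ⇑D7')) →
       (∀ x : H', (∀ y : H', ⟪D7' y, x⟫_ℂ = 0) → F' i x = 0) →
       ∀ x : H', F' i x = U (F i (U.symm x))) := by
  set Φ := U.conjStarAlgEquiv
  have hΦT : ∀ i, 1 ≤ i → i ≤ 7 → Φ (T i) = T' i := fun i h1 h7 => by
    ext x
    simp [Φ, hU i h1 h7]
  have hΦD : Φ D7 = D7' :=
    U.conjStarAlgEquiv_eq_of_comp_self_eq (hΦT 7 (by norm_num) le_rfl) hD7 hD72 hD7' hD7'2
  intro i hi1 hi6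
  have hΦF : D7' ∘L Φ (F i) ∘L D7' = D7' ∘L F' i ∘L D7' := by
    have h := congr(Φ $(hF i hi1 hi6))
    simp only [map_sub, ← ContinuousLinearMap.mul_def, ← star_eq_adjoint, map_mul, map_star,
      hΦD, hΦT i hi1 (by omega), hΦT (7 - i) (by omega) (by omega), hΦT 7 (by norm_num) le_rfl] at h
    rw [← hF' i hi1 hi6]
    exact h.symm
  refine ⟨fun x => congr($hΦF x), fun hFr hFs hF'r hF's x => ?_⟩
  have hΦF_supp : IsSupportedOnClosureRange D7' (Φ (F i)) :=
    hΦD ▸ IsSupportedOnClosureRange.conjStarAlgEquiv U ⟨hFr, hFs⟩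
  have h_eq := IsSupportedOnClosureRange.eq_of_comp_comp_eq hD7'.isSelfAdjoint ⟨hF'r, hF's⟩
    hΦF_supp hΦF.symm
  exact congr($h_eq x)

/-- If two 7-tuples of operators are intertwined by a unitary `U`, then their fundamental
operators are conjugated by `U`: `D_{T'₇} U F_i U* D_{T'₇} = D_{T'₇} F'_i D_{T'₇}`; and if
`F_i, F'_i` are supported on the respective defect spaces, then `F'_i = U F_i U*`. -/
theorem fundamental_operators_unitarily_equivalent
    {H H' : Type*} [NormedAddCommGroup H] [InnerProductSpace ℂ H] [CompleteSpace H]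
    [NormedAddCommGroup H'] [InnerProductSpace ℂ H'] [CompleteSpace H']
    (T : ℕ → (H →L[ℂ] H)) (T' : ℕ → (H' →L[ℂ] H'))
    (hT7 : ‖T 7‖ ≤ 1) (hT'7 : ‖T' 7‖ ≤ 1)
    (U : H ≃ₗᵢ[ℂ] H')
    (hU : ∀ i, 1 ≤ i → i ≤ 7 → ∀ x : H, U (T i x) = T' i (U x))
    (D7 : H →L[ℂ] H) (D7' : H' →L[ℂ] H')
    (hD7 : D7.IsPositive) (hD72 : D7 ∘L D7 = 1 - adjoint (T 7) ∘L T 7)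
    (hD7' : D7'.IsPositive) (hD7'2 : D7' ∘L D7' = 1 - adjoint (T' 7) ∘L T' 7)
    (F : ℕ → (H →L[ℂ] H)) (F' : ℕ → (H' →L[ℂ] H'))
    (hF : ∀ i, 1 ≤ i → i ≤ 6 →
      T i - adjoint (T (7 - i)) ∘L T 7 = D7 ∘L F i ∘L D7)
    (hF' : ∀ i, 1 ≤ i → i ≤ 6 →
      T' i - adjoint (T' (7 - i)) ∘L T' 7 = D7' ∘L F' i ∘L D7') :
    ∀ i, 1 ≤ i → i ≤ 6 →
      (∀ x : H', D7' (U (F i (U.symm (D7' x)))) = D7' (F' i (D7' x))) ∧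
      ((∀ x : H, F i x ∈ closure (Set.range ⇑D7)) →
       (∀ x : H, (∀ y : H, ⟪D7 y, x⟫_ℂ = 0) → F i x = 0) →
       (∀ x : H', F' i x ∈ closure (Set.range ⇑D7')) →
       (∀ x : H', (∀ y : H', ⟪D7' y, x⟫_ℂ = 0) → F' i x = 0) →
       ∀ x : H', F' i x = U (F i (U.symm x))) :=
  fundamental_operators_unitarily_equivalent_general T T' U hU D7 D7' hD7 hD72 hD7' hD7'2 F F' hF
    hF'
end

section
/- Let T be a contraction on a Hilbert space H, and set 𝒜 = SOT-lim_{n→∞} T*ⁿTⁿ (which exists since the sequence T*ⁿTⁿ is decreasing and bounded below by 0). Then T* 𝒜 T = 𝒜, and consequently the map V defined on Ran 𝒜^{1/2} by V(𝒜^{1/2}x) = 𝒜^{1/2}Tx is a well-defined isometry of Ran 𝒜^{1/2} (extending to an isometry of its closure). -/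
open ContinuousLinearMap Filter Topology

/-!
Since `T*ⁿ⁺¹Tⁿ⁺¹ = T* (T*ⁿTⁿ) T`, passing to the strong limit on both sides gives `T* 𝒜 T = 𝒜`.
For the square root, `‖𝒜^{1/2} y‖² = ⟪y, 𝒜 y⟫`, so `‖𝒜^{1/2} T x‖² = ⟪x, T* 𝒜 T x⟫ = ‖𝒜^{1/2} x‖²`.
-/

theorem comp_comp_eq_of_tendsto_of_succ {R M : Type*} [Semiring R] [TopologicalSpace M]
    [T2Space M] [AddCommMonoid M] [Module R M] (S : ℕ → M →L[R] M) (A B C : M →L[R] M)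
    (hS : ∀ x, Tendsto (fun n => S n x) atTop (𝓝 (A x)))
    (hsucc : ∀ n, B ∘L S n ∘L C = S (n + 1)) :
    B ∘L A ∘L C = A := by
  ext x
  have hB : Tendsto (fun n => B (S n (C x))) atTop (𝓝 (B (A (C x)))) :=
    (B.continuous.tendsto _).comp (hS (C x))
  have hshift : Tendsto (fun n => S (n + 1) x) atTop (𝓝 (A x)) :=
    (hS x).comp (tendsto_add_atTop_nat 1)
  refine tendsto_nhds_unique (hB.congr fun n => ?_) hshift
  rw [← hsucc n]
  rfl

theorem comp_pow_comp_pow_comp {R M : Type*} [Semiring R] [TopologicalSpace M]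
    [AddCommMonoid M] [Module R M] (B C : M →L[R] M) (n : ℕ) :
    B ∘L ((B ^ n) ∘L (C ^ n)) ∘L C = (B ^ (n + 1)) ∘L (C ^ (n + 1)) := by
  simp only [← mul_def, pow_succ', ← pow_succ, mul_assoc]

theorem IsSelfAdjoint.norm_apply_eq_sqrt_re_inner {𝕜 E : Type*} [RCLike 𝕜]
    [NormedAddCommGroup E] [InnerProductSpace 𝕜 E] [CompleteSpace E] {S : E →L[𝕜] E}
    (hS : IsSelfAdjoint S) (x : E) :
    ‖S x‖ = √(RCLike.re (inner 𝕜 x ((S ∘L S) x))) := by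
  rw [apply_norm_eq_sqrt_inner_adjoint_right, isSelfAdjoint_iff'.mp hS]

theorem IsSelfAdjoint.norm_apply_apply_eq_of_adjoint_comp_comp {𝕜 E : Type*} [RCLike 𝕜]
    [NormedAddCommGroup E] [InnerProductSpace 𝕜 E] [CompleteSpace E] {S : E →L[𝕜] E}
    (hS : IsSelfAdjoint S) {T : E →L[𝕜] E} (hT : adjoint T ∘L (S ∘L S) ∘L T = S ∘L S)
    (x : E) : ‖S (T x)‖ = ‖S x‖ := by
  have hinner : inner 𝕜 (T x) ((S ∘L S) (T x)) = inner 𝕜 x ((S ∘L S) x) := by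
    conv_rhs => rw [← hT]
    exact (adjoint_inner_right T x _).symm
  rw [hS.norm_apply_eq_sqrt_re_inner, hS.norm_apply_eq_sqrt_re_inner, hinner]

theorem asymptotic_limit_isometry_general
    {H : Type*} [NormedAddCommGroup H] [InnerProductSpace ℂ H] [CompleteSpace H]
    (T A As : H →L[ℂ] H)
    (hA : ∀ x : H,
      Filter.Tendsto (fun n : ℕ => (((adjoint T) ^ n) ∘L (T ^ n)) x) Filter.atTop (nhds (A x)))
    (hAs : As.IsPositive) (hAs2 : As ∘L As = A) :
    adjoint T ∘L A ∘L T = A ∧ ∀ x : H, ‖As (T x)‖ = ‖As x‖ := by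
  have hfixed : adjoint T ∘L A ∘L T = A :=
    comp_comp_eq_of_tendsto_of_succ _ A _ _ hA (comp_pow_comp_pow_comp _ _)
  subst hAs2
  exact ⟨hfixed, hAs.isSelfAdjoint.norm_apply_apply_eq_of_adjoint_comp_comp hfixed⟩

/-- Let `T` be a contraction and `𝒜 = SOT-lim T*ⁿTⁿ`.  Then `T* 𝒜 T = 𝒜`, and the map
`V (𝒜^{1/2} x) = 𝒜^{1/2} T x` is a well-defined isometry on `Ran 𝒜^{1/2}`, i.e.
`‖𝒜^{1/2} T x‖ = ‖𝒜^{1/2} x‖` for all `x`. -/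
theorem asymptotic_limit_isometry
    {H : Type*} [NormedAddCommGroup H] [InnerProductSpace ℂ H] [CompleteSpace H]
    (T A As : H →L[ℂ] H) (hT : ‖T‖ ≤ 1)
    (hA : ∀ x : H,
      Filter.Tendsto (fun n : ℕ => (((adjoint T) ^ n) ∘L (T ^ n)) x) Filter.atTop (nhds (A x)))
    (hAs : As.IsPositive) (hAs2 : As ∘L As = A) :
    adjoint T ∘L A ∘L T = A ∧ ∀ x : H, ‖As (T x)‖ = ‖As x‖ :=
  asymptotic_limit_isometry_general T A As hA hAs hAs2
end

section
/- Let α ∈ 𝔻 \ {0} and let T_α on ℓ²(ℕ) be the weighted shift T_α(a₀,a₁,...) = (0, αa₀, a₁, a₂, ...), R₁ = T_α, R₃ = T_α², and 𝒜 = SOT-lim R₃*ⁿR₃ⁿ. Then 𝒜(a₀,a₁,a₂,...) = (|α|²a₀, a₁, a₂, ...), and D_{R₃*} R₁ 𝒜 ≠ D_{R₃*} 𝒜 R₁. -/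
/-!
With `R = T²`, the operator `R* R` is `diag(|α|², 1, 1, …)`. It fixes every vector vanishing at
index `0`, in particular the range of `R`, so `R* R R = R` and hence `R*ⁿ Rⁿ = R* R` for all
`n ≥ 1`; thus `𝒜 = R* R`. On `e₀` the two operators give `|α|² D(T e₀)` and `D(T e₀)`, and
`D(T e₀) ≠ 0`: otherwise `T e₀ = α e₁` would equal `R R* T e₀`, which vanishes at index `1`.
-/

open ContinuousLinearMap Filter Topology
open scoped lp InnerProductSpace

theorem pow_succ_mul_pow_succ_of_mul_mul_eq {M : Type*} [Monoid M] {a b : M} (h : b * a * a = a)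
    (n : ℕ) : b ^ (n + 1) * a ^ (n + 1) = b * a := by
  induction n with
  | zero => simp
  | succ n ih =>
    calc b ^ (n + 2) * a ^ (n + 2) = b ^ (n + 1) * (b * a * a) * a ^ n := by
          rw [pow_succ b (n + 1), pow_succ' a (n + 1), pow_succ' a n]
          simp only [mul_assoc]
      _ = b ^ (n + 1) * a ^ (n + 1) := by rw [h, mul_assoc, ← pow_succ']
      _ = b * a := ih

theorem eq_mul_of_tendsto_pow_mul_pow {R E : Type*} [Semiring R] [TopologicalSpace E] [T2Space E]
    [AddCommMonoid E] [Module R E] {A B C : E →L[R] E} (hBCC : B * C * C = C)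
    (h : ∀ x, Tendsto (fun n : ℕ => (B ^ n * C ^ n) x) atTop (𝓝 (A x))) : A = B * C := by
  ext x
  refine tendsto_nhds_unique (h x) (tendsto_const_nhds.congr' ?_)
  filter_upwards [eventually_ge_atTop 1] with n hn
  obtain ⟨m, rfl⟩ := Nat.exists_eq_add_of_le' hn
  rw [pow_succ_mul_pow_succ_of_mul_mul_eq hBCC]

variable {𝕜 : Type*} [RCLike 𝕜]

theorem lp.inner_single_one_left (n : ℕ) (v : ℓ²(ℕ, 𝕜)) :
    ⟪lp.single 2 n (1 : 𝕜), v⟫_𝕜 = v n := by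
  rw [lp.inner_single_left, RCLike.inner_apply, map_one, mul_one]

structure IsWeightedShift (α : 𝕜) (T : ℓ²(ℕ, 𝕜) →L[𝕜] ℓ²(ℕ, 𝕜)) : Prop where
  apply_zero : ∀ a, T a 0 = 0
  apply_one : ∀ a, T a 1 = α * a 0
  apply_add_two : ∀ a (n : ℕ), T a (n + 2) = a (n + 1)

namespace IsWeightedShift

variable {α : 𝕜} {T : ℓ²(ℕ, 𝕜) →L[𝕜] ℓ²(ℕ, 𝕜)}

theorem sq_apply_one (hT : IsWeightedShift α T) (a : ℓ²(ℕ, 𝕜)) : (T ∘L T) a 1 = 0 := by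
  rw [comp_apply, hT.apply_one, hT.apply_zero, mul_zero]

theorem sq_apply_two (hT : IsWeightedShift α T) (a : ℓ²(ℕ, 𝕜)) : (T ∘L T) a 2 = α * a 0 := by
  rw [comp_apply, hT.apply_add_two, hT.apply_one]

theorem sq_apply_add_three (hT : IsWeightedShift α T) (a : ℓ²(ℕ, 𝕜)) (n : ℕ) :
    (T ∘L T) a (n + 3) = a (n + 1) := by
  rw [comp_apply, hT.apply_add_two, hT.apply_add_two]

theorem sq_single_zero (hT : IsWeightedShift α T) :
    (T ∘L T) (lp.single 2 0 1) = α • lp.single 2 2 (1 : 𝕜) := by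
  ext (_ | _ | _ | n)
  · rw [comp_apply, hT.apply_zero]; simp
  · rw [hT.sq_apply_one]; simp
  · rw [hT.sq_apply_two]; simp
  · rw [hT.sq_apply_add_three]; simp [lp.single_apply]

theorem sq_single_succ (hT : IsWeightedShift α T) (m : ℕ) :
    (T ∘L T) (lp.single 2 (m + 1) 1) = lp.single 2 (m + 3) (1 : 𝕜) := by
  ext (_ | _ | _ | n)
  · rw [comp_apply, hT.apply_zero]; simp [lp.single_apply]
  · rw [hT.sq_apply_one]; simp [lp.single_apply]
  · rw [hT.sq_apply_two]; simp [lp.single_apply]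
  · rw [hT.sq_apply_add_three]; simp [Pi.single_apply]

theorem adjoint_comp_self_apply_zero (hT : IsWeightedShift α T) (a : ℓ²(ℕ, 𝕜)) :
    (adjoint (T ∘L T) ∘L (T ∘L T)) a 0 = (‖α‖ ^ 2 : 𝕜) * a 0 := by
  rw [← lp.inner_single_one_left, comp_apply, adjoint_inner_right, hT.sq_single_zero,
    inner_smul_left, lp.inner_single_one_left, hT.sq_apply_two, ← mul_assoc, RCLike.conj_mul]

theorem adjoint_comp_self_apply_succ (hT : IsWeightedShift α T) (a : ℓ²(ℕ, 𝕜)) (n : ℕ) :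
    (adjoint (T ∘L T) ∘L (T ∘L T)) a (n + 1) = a (n + 1) := by
  rw [← lp.inner_single_one_left, comp_apply, adjoint_inner_right, hT.sq_single_succ,
    lp.inner_single_one_left, hT.sq_apply_add_three]

theorem adjoint_comp_self_apply_of_apply_zero (hT : IsWeightedShift α T) {a : ℓ²(ℕ, 𝕜)}
    (ha : a 0 = 0) : (adjoint (T ∘L T) ∘L (T ∘L T)) a = a := by
  ext (_ | n)
  · rw [hT.adjoint_comp_self_apply_zero, ha, mul_zero]
  · exact hT.adjoint_comp_self_apply_succ a n

theorem adjoint_comp_self_single_zero (hT : IsWeightedShift α T) :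
    (adjoint (T ∘L T) ∘L (T ∘L T)) (lp.single 2 0 1) =
      (‖α‖ ^ 2 : 𝕜) • lp.single 2 0 (1 : 𝕜) := by
  ext (_ | n)
  · rw [hT.adjoint_comp_self_apply_zero]; simp
  · rw [hT.adjoint_comp_self_apply_succ]; simp

theorem adjoint_sq_mul_sq_mul_sq (hT : IsWeightedShift α T) :
    adjoint (T ∘L T) * (T ∘L T) * (T ∘L T) = T ∘L T :=
  ext fun _ => hT.adjoint_comp_self_apply_of_apply_zero (hT.apply_zero _)

theorem defect_apply_single_zero_ne_zero (hT : IsWeightedShift α T) (hα0 : α ≠ 0)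
    {D : ℓ²(ℕ, 𝕜) →L[𝕜] ℓ²(ℕ, 𝕜)} (hD : D ∘L D = 1 - (T ∘L T) ∘L adjoint (T ∘L T)) :
    D (T (lp.single 2 0 1)) ≠ 0 := by
  intro h
  have hfix : T (lp.single 2 0 1) = (T ∘L T) (adjoint (T ∘L T) (T (lp.single 2 0 1))) := by
    have := DFunLike.congr_fun hD (T (lp.single 2 0 1))
    rwa [comp_apply, h, map_zero, sub_apply, one_apply_eq_self, comp_apply, eq_comm,
      sub_eq_zero] at this
  have hcoord := congr($hfix 1)
  rw [hT.apply_one, hT.sq_apply_one, lp.single_apply_self, mul_one] at hcoord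
  exact hα0 hcoord

theorem defect_comp_comp_adjoint_comp_self_ne (hT : IsWeightedShift α T) (hα0 : α ≠ 0)
    (hα1 : ‖α‖ ≠ 1) {D : ℓ²(ℕ, 𝕜) →L[𝕜] ℓ²(ℕ, 𝕜)} (hD : D ∘L D = 1 - (T ∘L T) ∘L adjoint (T ∘L T)) :
    D ∘L T ∘L (adjoint (T ∘L T) ∘L (T ∘L T)) ≠ D ∘L (adjoint (T ∘L T) ∘L (T ∘L T)) ∘L T := by
  intro h
  have h₀ : D (T ((adjoint (T ∘L T) ∘L (T ∘L T)) (lp.single 2 0 1))) =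
      D ((adjoint (T ∘L T) ∘L (T ∘L T)) (T (lp.single 2 0 1))) :=
    DFunLike.congr_fun h _
  rw [hT.adjoint_comp_self_single_zero, hT.adjoint_comp_self_apply_of_apply_zero (hT.apply_zero _),
    map_smul, map_smul] at h₀
  have hnorm : (‖α‖ ^ 2 : 𝕜) = 1 :=
    smul_left_injective 𝕜 (hT.defect_apply_single_zero_ne_zero hα0 hD)
      (h₀.trans (one_smul _ _).symm)
  exact hα1 ((pow_eq_one_iff_of_nonneg (norm_nonneg α) two_ne_zero).mp (mod_cast hnorm))

end IsWeightedShift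

theorem weighted_shift_asymptotic_counterexample_general (α : ℂ) (hα0 : α ≠ 0) (hα : ‖α‖ < 1)
    (T A Ds : lp (fun _ : ℕ => ℂ) 2 →L[ℂ] lp (fun _ : ℕ => ℂ) 2)
    (hT0 : ∀ a, T a 0 = 0)
    (hT1 : ∀ a, T a 1 = α * a 0)
    (hTn : ∀ a (n : ℕ), T a (n + 2) = a (n + 1))
    (hA : ∀ x, Filter.Tendsto
      (fun n : ℕ => (((adjoint (T ∘L T)) ^ n) ∘L ((T ∘L T) ^ n)) x)
      Filter.atTop (nhds (A x)))
    (hDs2 : Ds ∘L Ds = 1 - (T ∘L T) ∘L adjoint (T ∘L T)) :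
    (∀ a, A a 0 = (‖α‖ ^ 2 : ℂ) * a 0) ∧
    (∀ a (n : ℕ), A a (n + 1) = a (n + 1)) ∧
    Ds ∘L T ∘L A ≠ Ds ∘L A ∘L T := by
  have hT : IsWeightedShift α T := ⟨hT0, hT1, hTn⟩
  obtain rfl : A = adjoint (T ∘L T) * (T ∘L T) :=
    eq_mul_of_tendsto_pow_mul_pow hT.adjoint_sq_mul_sq_mul_sq hA
  exact ⟨hT.adjoint_comp_self_apply_zero, hT.adjoint_comp_self_apply_succ,
    hT.defect_comp_comp_adjoint_comp_self_ne hα0 hα.ne hDs2⟩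

/-- Let `α ∈ 𝔻 \ {0}`, `T_α` the weighted shift `T_α(a₀,a₁,...) = (0, αa₀, a₁, ...)` on
`ℓ²(ℕ)`, `R₁ = T_α`, `R₃ = T_α²`, and `𝒜 = SOT-lim R₃*ⁿ R₃ⁿ`.  Then
`𝒜(a₀,a₁,a₂,...) = (|α|² a₀, a₁, a₂, ...)` and `D_{R₃*} R₁ 𝒜 ≠ D_{R₃*} 𝒜 R₁`. -/
theorem weighted_shift_asymptotic_counterexample (α : ℂ) (hα0 : α ≠ 0) (hα : ‖α‖ < 1)
    (T A Ds : lp (fun _ : ℕ => ℂ) 2 →L[ℂ] lp (fun _ : ℕ => ℂ) 2)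
    (hT0 : ∀ a, T a 0 = 0)
    (hT1 : ∀ a, T a 1 = α * a 0)
    (hTn : ∀ a (n : ℕ), T a (n + 2) = a (n + 1))
    (hA : ∀ x, Filter.Tendsto
      (fun n : ℕ => (((adjoint (T ∘L T)) ^ n) ∘L ((T ∘L T) ^ n)) x)
      Filter.atTop (nhds (A x)))
    (hDs : Ds.IsPositive)
    (hDs2 : Ds ∘L Ds = 1 - (T ∘L T) ∘L adjoint (T ∘L T)) :
    (∀ a, A a 0 = (‖α‖ ^ 2 : ℂ) * a 0) ∧
    (∀ a (n : ℕ), A a (n + 1) = a (n + 1)) ∧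
    Ds ∘L T ∘L A ≠ Ds ∘L A ∘L T :=
  weighted_shift_asymptotic_counterexample_general α hα0 hα T A Ds hT0 hT1 hTn hA hDs2
end
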